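/- Let α₁,…,α_N be distinct vectors in ℝⁿ, ρ > 0, and let 1 ≤ p, q, r ≤ ∞ satisfy 1/p + 1/q = 1/r. Define the bilinear operator S_{α,ρ} on N-tuples of functions by S_{α,ρ}(f,g)(x) = (f_k(x + ρα_k) g_k(x − α_k))_{k=1}^N. Then the operator norm of S_{α,ρ} from L^p(ℝⁿ; ℓ²_N) × L^q(ℝⁿ; ℓ²_N) to L^r(ℝⁿ; ℓ²_N) is at least max{N^{1/p − 1/2}, N^{1/q − 1/2}}. -/

import Mathlib

/-!
Test the bound on indicators of `ε`-balls, with `ε` so small that the balls around the points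
`t • α k` are pairwise disjoint for the four scalars `t` that occur. For `f k = 𝟙_{B(0, ε)}` and
`g k = 𝟙_{B(-(ρ + 1) • α k, ε)}` the products are the indicators of the disjoint balls
`B(-ρ • α k, ε)`. With `m` the volume of an `ε`-ball the three norms are `(N m)^(1/r)`,
`√N m^(1/p)` and `(N m)^(1/q)`, so `1/r = 1/p + 1/q` leaves `N^(1/p) ≤ C √N`. Exchanging the roles
of `f` and `g` (the products then sit on the balls `B(α k, ε)`) gives the bound with `q`.
-/

open Metric MeasureTheory ENNReal Filter Topology Function

noncomputable def eLpNormℓ2 {ι α F : Type*} [Fintype ι] [MeasurableSpace α] [Norm F]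
    (f : ι → α → F) (p : ℝ≥0∞) (μ : Measure α) : ℝ≥0∞ :=
  eLpNorm (fun x => √(∑ k, ‖f k x‖ ^ 2)) p μ

lemma eventually_pairwise_disjoint_ball {ι X : Type*} [Finite ι] [MetricSpace X]
    {c : ι → X} (hc : Injective c) :
    ∀ᶠ ε in 𝓝 (0 : ℝ), Pairwise (Disjoint on fun k => ball (c k) ε) := by
  simp only [Pairwise, onFun, eventually_all]
  intro j k hjk
  have hlim : Tendsto (fun ε : ℝ => ε + ε) (𝓝 0) (𝓝 0) := by
    simpa using (tendsto_id (x := 𝓝 (0 : ℝ))).add tendsto_id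
  filter_upwards [hlim.eventually_lt_const (dist_pos.2 (hc.ne hjk))] with ε hε
  exact ball_disjoint_ball hε.le

lemma rpow_sub_half_le_of_le_mul {N : ℝ} (hN : 0 < N) {m : ℝ≥0∞} (hm0 : m ≠ 0) (hm : m ≠ ∞)
    {C s t : ℝ}
    (h : (ENNReal.ofReal N * m) ^ (s + t)
      ≤ ENNReal.ofReal C * (ENNReal.ofReal √N * m ^ s) * (ENNReal.ofReal N * m) ^ t) :
    N ^ (s - 1 / 2) ≤ C := by
  have hN0 : ENNReal.ofReal N ≠ 0 := by simpa using hN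
  have hNm0 : ENNReal.ofReal N * m ≠ 0 := mul_ne_zero hN0 hm0
  have hNm : ENNReal.ofReal N * m ≠ ∞ := mul_ne_top ofReal_ne_top hm
  rw [ENNReal.rpow_add _ _ hNm0 hNm, ENNReal.mul_rpow_of_ne_zero hN0 hm0,
    ENNReal.mul_le_mul_iff_left (ENNReal.rpow_pos (pos_iff_ne_zero.2 hNm0) hNm).ne'
      (ENNReal.rpow_ne_top_of_ne_zero hNm0 hNm), ← mul_assoc,
    ENNReal.mul_le_mul_iff_left (ENNReal.rpow_pos (pos_iff_ne_zero.2 hm0) hm).ne'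
      (ENNReal.rpow_ne_top_of_ne_zero hm0 hm), ← ENNReal.ofReal_mul' (Real.sqrt_nonneg _),
    ENNReal.ofReal_rpow_of_pos hN, ENNReal.ofReal_le_ofReal_iff'] at h
  have hNs : N ^ s ≤ C * √N := h.resolve_right (Real.rpow_pos_of_pos hN s).not_ge
  rwa [Real.rpow_sub hN, ← Real.sqrt_eq_rpow, div_le_iff₀ (Real.sqrt_pos.2 hN)]

section Indicator

variable {ι α 𝕜 : Type*} [Fintype ι] [NormedRing 𝕜] [NormOneClass 𝕜]

lemma norm_indicator_one_sq (s : Set α) (x : α) :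
    ‖s.indicator (1 : α → 𝕜) x‖ ^ 2 = s.indicator 1 x := by
  by_cases hx : x ∈ s <;> simp [hx]

variable [MeasurableSpace α] {μ : Measure α} {p : ℝ≥0∞}

lemma eLpNormℓ2_indicator_one_of_pairwise_disjoint {s : ι → Set α}
    (hs : ∀ k, MeasurableSet (s k)) (hd : Pairwise (Disjoint on s)) (hμ : μ (⋃ k, s k) ≠ 0)
    (hp : p ≠ 0) :
    eLpNormℓ2 (fun k => (s k).indicator (1 : α → 𝕜)) p μ = (∑ k, μ (s k)) ^ (1 / p).toReal := by
  have hF : (fun x => √(∑ k, ‖(s k).indicator (1 : α → 𝕜) x‖ ^ 2))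
      = (⋃ k, s k).indicator fun _ => 1 := by
    funext x
    have hsum := Finset.indicator_biUnion_apply Finset.univ s (f := (1 : α → ℝ))
      (fun i _ j _ hij => hd hij) x
    simp only [Finset.mem_univ, Set.iUnion_true] at hsum
    simp_rw [norm_indicator_one_sq, ← hsum]
    by_cases hx : x ∈ ⋃ k, s k <;> simp [hx]
  rw [eLpNormℓ2, hF, eLpNorm_indicator_const' (MeasurableSet.iUnion hs) hμ hp,
    measure_iUnion hd hs, tsum_fintype]
  simp [ENNReal.toReal_inv]

lemma eLpNormℓ2_const_indicator_one {s : Set α} (hs : MeasurableSet s) (hμ : μ s ≠ 0)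
    (hp : p ≠ 0) :
    eLpNormℓ2 (fun _ : ι => s.indicator (1 : α → 𝕜)) p μ
      = ENNReal.ofReal √(Fintype.card ι) * μ s ^ (1 / p).toReal := by
  have hF : (fun x => √(∑ _ : ι, ‖s.indicator (1 : α → 𝕜) x‖ ^ 2))
      = s.indicator fun _ => √(Fintype.card ι) := by
    funext x
    by_cases hx : x ∈ s <;> simp [hx]
  rw [eLpNormℓ2, hF, eLpNorm_indicator_const' hs hμ hp,
    Real.enorm_of_nonneg (Real.sqrt_nonneg _)]
  simp [ENNReal.toReal_inv]

end Indicator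

section Ball

variable {ι E 𝕜 : Type*} [Fintype ι] [NormedAddCommGroup E] [NormedRing 𝕜] [MeasurableSpace E]
  {μ : Measure E} {ε : ℝ} {p : ℝ≥0∞}

lemma eLpNormℓ2_indicator_ball_shift {a b c u v : ι → E} (ha : ∀ k, a k = c k + u k)
    (hb : ∀ k, b k = c k - v k) :
    eLpNormℓ2 (fun k x => (ball (a k) ε).indicator (1 : E → 𝕜) (x + u k)
        * (ball (b k) ε).indicator 1 (x - v k)) p μ
      = eLpNormℓ2 (fun k => (ball (c k) ε).indicator (1 : E → 𝕜)) p μ := by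
  congr 1
  funext k x
  have hu : x + u k ∈ ball (a k) ε ↔ x ∈ ball (c k) ε := by
    rw [ha, mem_ball, mem_ball, dist_add_right]
  have hv : x - v k ∈ ball (b k) ε ↔ x ∈ ball (c k) ε := by
    rw [hb, mem_ball, mem_ball, dist_sub_right]
  by_cases hx : x ∈ ball (c k) ε <;> simp [hu, hv, hx]

variable [NormOneClass 𝕜] [BorelSpace E] [μ.IsAddHaarMeasure] [Nonempty ι]

lemma eLpNormℓ2_indicator_ball_of_pairwise_disjoint (hε : 0 < ε) {a : ι → E}
    (ha : Pairwise (Disjoint on fun k => ball (a k) ε)) (hp : p ≠ 0) :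
    eLpNormℓ2 (fun k => (ball (a k) ε).indicator (1 : E → 𝕜)) p μ
      = (Fintype.card ι * μ (ball 0 ε)) ^ (1 / p).toReal := by
  obtain ⟨k⟩ := ‹Nonempty ι›
  have hμ : μ (⋃ k, ball (a k) ε) ≠ 0 := fun h0 =>
    (measure_ball_pos μ (a k) hε).ne'
      (measure_mono_null (Set.subset_iUnion (fun k => ball (a k) ε) k) h0)
  rw [eLpNormℓ2_indicator_one_of_pairwise_disjoint (fun _ => measurableSet_ball) ha hμ hp]
  simp [Measure.addHaar_ball_center μ (a _)]

variable [ProperSpace E]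

lemma rpow_sub_half_le_of_eLpNormℓ2_indicator_ball_le (hε : 0 < ε) {a b : ι → E} (c : E)
    (ha : Pairwise (Disjoint on fun k => ball (a k) ε))
    (hb : Pairwise (Disjoint on fun k => ball (b k) ε))
    {q r : ℝ≥0∞} (hr : r ≠ 0) (hpqr : 1 / p + 1 / q = 1 / r) {C : ℝ}
    (h : eLpNormℓ2 (fun k => (ball (a k) ε).indicator (1 : E → 𝕜)) r μ ≤
      ENNReal.ofReal C * eLpNormℓ2 (fun _ : ι => (ball c ε).indicator (1 : E → 𝕜)) p μ *
        eLpNormℓ2 (fun k => (ball (b k) ε).indicator (1 : E → 𝕜)) q μ) :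
    (Fintype.card ι : ℝ) ^ ((1 / p).toReal - 1 / 2) ≤ C := by
  obtain ⟨hp, hq⟩ : 1 / p ≠ ∞ ∧ 1 / q ≠ ∞ := by
    rw [← ENNReal.add_ne_top, hpqr]
    simpa using hr
  have hexp : (1 / r).toReal = (1 / p).toReal + (1 / q).toReal := by
    rw [← hpqr, ENNReal.toReal_add hp hq]
  rw [eLpNormℓ2_indicator_ball_of_pairwise_disjoint hε ha hr,
    eLpNormℓ2_const_indicator_one measurableSet_ball (measure_ball_pos μ c hε).ne'
      (by simpa using hp),
    eLpNormℓ2_indicator_ball_of_pairwise_disjoint hε hb (by simpa using hq),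
    Measure.addHaar_ball_center μ c, hexp, ← ENNReal.ofReal_natCast] at h
  exact rpow_sub_half_le_of_le_mul (by exact_mod_cast Fintype.card_pos)
    (measure_ball_pos μ 0 hε).ne' measure_ball_lt_top.ne h

end Ball

theorem shift_operator_norm_lower_bound_general (n N : ℕ) (hN : 0 < N)
    (α : Fin N → EuclideanSpace ℝ (Fin n)) (hα : Function.Injective α)
    (ρ : ℝ) (hρ : 0 < ρ) (p q r : ℝ≥0∞) (hr : 1 ≤ r)
    (hpqr : 1 / p + 1 / q = 1 / r) (C : ℝ)
    (hbound : ∀ f g : Fin N → EuclideanSpace ℝ (Fin n) → ℂ,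
      eLpNorm (fun x => Real.sqrt (∑ k : Fin N,
          ‖f k (x + ρ • α k) * g k (x - α k)‖ ^ 2)) r volume ≤
        ENNReal.ofReal C *
          eLpNorm (fun x => Real.sqrt (∑ k : Fin N, ‖f k x‖ ^ 2)) p volume *
          eLpNorm (fun x => Real.sqrt (∑ k : Fin N, ‖g k x‖ ^ 2)) q volume) :
    max ((N : ℝ) ^ ((1 / p).toReal - 1 / 2)) ((N : ℝ) ^ ((1 / q).toReal - 1 / 2)) ≤ C := by
  have : NeZero N := ⟨hN.ne'⟩
  have hr0 : r ≠ 0 := (zero_lt_one.trans_le hr).ne'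
  have hbound' : ∀ f g : Fin N → EuclideanSpace ℝ (Fin n) → ℂ,
      eLpNormℓ2 (fun k x => f k (x + ρ • α k) * g k (x - α k)) r volume
        ≤ ENNReal.ofReal C * eLpNormℓ2 f p volume * eLpNormℓ2 g q volume := hbound
  have hdisj : ∀ t : ℝ, t ≠ 0 →
      ∀ᶠ ε in 𝓝[>] 0, Pairwise (Disjoint on fun k => ball (t • α k) ε) := fun t ht =>
    nhdsWithin_le_nhds (eventually_pairwise_disjoint_ball ((smul_right_injective _ ht).comp hα))
  obtain ⟨ε, ⟨⟨⟨h₁, h₂⟩, h₃⟩, h₄⟩, hε⟩ := ((((hdisj (-ρ) (by linarith)).and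
    (hdisj (-(ρ + 1)) (by linarith))).and (hdisj 1 one_ne_zero)).and
    (hdisj (ρ + 1) (by linarith))).and self_mem_nhdsWithin |>.exists
  refine max_le ?_ ?_
  · have h := hbound' (fun _ => (ball 0 ε).indicator 1)
      fun k => (ball ((-(ρ + 1)) • α k) ε).indicator 1
    rw [eLpNormℓ2_indicator_ball_shift (c := fun k => (-ρ) • α k) (fun k => by module)
      (fun k => by module)] at h
    simpa using rpow_sub_half_le_of_eLpNormℓ2_indicator_ball_le hε 0 h₁ h₂ hr0 hpqr h
  · have h := hbound' (fun k => (ball ((ρ + 1) • α k) ε).indicator 1)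
      fun _ => (ball 0 ε).indicator 1
    rw [eLpNormℓ2_indicator_ball_shift (c := fun k => (1 : ℝ) • α k) (fun k => by module)
      (fun k => by module), mul_right_comm] at h
    simpa using rpow_sub_half_le_of_eLpNormℓ2_indicator_ball_le hε 0 h₃ h₄ hr0
      ((add_comm _ _).trans hpqr) h

theorem shift_operator_norm_lower_bound (n N : ℕ) (hN : 0 < N)
    (α : Fin N → EuclideanSpace ℝ (Fin n)) (hα : Function.Injective α)
    (ρ : ℝ) (hρ : 0 < ρ) (p q r : ℝ≥0∞) (hp : 1 ≤ p) (hq : 1 ≤ q) (hr : 1 ≤ r)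
    (hpqr : 1 / p + 1 / q = 1 / r) (C : ℝ) (hC : 0 ≤ C)
    (hbound : ∀ f g : Fin N → EuclideanSpace ℝ (Fin n) → ℂ,
      eLpNorm (fun x => Real.sqrt (∑ k : Fin N,
          ‖f k (x + ρ • α k) * g k (x - α k)‖ ^ 2)) r volume ≤
        ENNReal.ofReal C *
          eLpNorm (fun x => Real.sqrt (∑ k : Fin N, ‖f k x‖ ^ 2)) p volume *
          eLpNorm (fun x => Real.sqrt (∑ k : Fin N, ‖g k x‖ ^ 2)) q volume) :
    max ((N : ℝ) ^ ((1 / p).toReal - 1 / 2)) ((N : ℝ) ^ ((1 / q).toReal - 1 / 2)) ≤ C :=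
  shift_operator_norm_lower_bound_general n N hN α hα ρ hρ p q r hr hpqr C hbound
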